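/- arXiv:math/0010280 — 3 statements merged into one kernel-verified Lean document; each statement's English description precedes it below -/
import Mathlib

section
/- Let Γ be a finitely generated group and K a subgroup of Γ of finite index d (so that K is also finitely generated). Then β(Γ) ≥ β(K)^{1/(2d−1)}, where β(G) denotes the infimum of the growth rates β(S,G) over all finite generating sets S of G. -/
open Subgroup

/-- The ball of radius `n`: elements expressible as a product of at most `n`
elements of `S ∪ S⁻¹`. -/
def ball {G : Type*} [Group G] (S : Finset G) (n : ℕ) : Set G :=
  {g | ∃ l : List G, l.length ≤ n ∧ (∀ x ∈ l, x ∈ S ∨ x⁻¹ ∈ S) ∧ l.prod = g}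

/-- The growth rate `β(S,Γ) = inf_{n ≥ 1} β_n(S,Γ)^(1/n)`. -/
noncomputable def growthRate {G : Type*} [Group G] (S : Finset G) : ℝ :=
  ⨅ n : ℕ, (Nat.card (ball S (n + 1)) : ℝ) ^ (((n : ℝ) + 1)⁻¹)

/-- Word length with respect to `S`. -/
noncomputable def wordLength {G : Type*} [Group G] (S : Finset G) (g : G) : ℕ :=
  sInf {n : ℕ | g ∈ ball S n}

/-- `a` and `b` generate a free semigroup. -/
def GeneratesFreeSemigroup {G : Type*} [Group G] (a b : G) : Prop :=
  Function.Injective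
    (FreeSemigroup.lift (fun x : Bool => if x then a else b) : FreeSemigroup Bool →ₙ* G)

/-- `β(G) = inf_S β(S,G)` over all finite generating sets. -/
noncomputable def groupGrowthRate (G : Type*) [Group G] : ℝ :=
  sInf {r : ℝ | ∃ S : Finset G, Subgroup.closure (S : Set G) = ⊤ ∧ r = growthRate S}

/-- Uniform exponential growth: `inf_S β(S,G) > 1`. -/
def UniformExponentialGrowth (G : Type*) [Group G] : Prop :=
  1 < groupGrowthRate G

/-- Exponential growth: `β(S,G) > 1` for some finite generating set. -/
def ExponentialGrowth (G : Type*) [Group G] : Prop :=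
  ∃ S : Finset G, Subgroup.closure (S : Set G) = ⊤ ∧ 1 < growthRate S

/-- Polynomial growth. -/
def PolynomialGrowth (G : Type*) [Group G] : Prop :=
  ∃ (S : Finset G) (C : ℝ) (d : ℕ), Subgroup.closure (S : Set G) = ⊤ ∧
    ∀ n : ℕ, 1 ≤ n → (Nat.card (ball S n) : ℝ) ≤ C * (n : ℝ) ^ d

/-!
If `S` generates `G` and `K` has index `d`, then the ball of radius `d - 1` already meets every
coset of `K`: the set of cosets it meets grows at each radius until it is all of them. Schreier's
lemma therefore gives generators `T` of `K` of `S`-length at most `2d - 1`, so the `T`-ball of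
radius `n` embeds into the `S`-ball of radius `(2d - 1) n`, which by submultiplicativity has at
most `β_n(S)^(2d - 1)` elements. Taking `n`-th roots, `β(T)^(1/(2d - 1)) ≤ β(S)`.
-/

open scoped Pointwise

section Ball

variable {G : Type*} [Group G] (S : Finset G)

theorem one_mem_ball (n : ℕ) : (1 : G) ∈ ball S n := ⟨[], by simp⟩

theorem ball_mono {m n : ℕ} (h : m ≤ n) : ball S m ⊆ ball S n :=
  fun _ ⟨l, hl, hlS, hprod⟩ => ⟨l, hl.trans h, hlS, hprod⟩

theorem mul_mem_ball {a b : G} {m n : ℕ} (ha : a ∈ ball S m) (hb : b ∈ ball S n) :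
    a * b ∈ ball S (m + n) := by
  obtain ⟨l, hl, hlS, rfl⟩ := ha
  obtain ⟨l', hl', hl'S, rfl⟩ := hb
  refine ⟨l ++ l', by simp only [List.length_append]; omega, fun x hx => ?_, List.prod_append⟩
  exact (List.mem_append.1 hx).elim (hlS x) (hl'S x)

theorem mem_ball_one {g : G} : g ∈ ball S 1 ↔ g = 1 ∨ g ∈ S ∨ g⁻¹ ∈ S := by
  constructor
  · rintro ⟨l, hl, hlS, rfl⟩
    match l, hl with
    | [], _ => simp
    | [x], _ => simpa using Or.inr (hlS x (by simp))
  · rintro (rfl | h)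
    · exact one_mem_ball S 1
    · exact ⟨[g], by simp, by simpa using h, by simp⟩

theorem ball_zero : ball S 0 = 1 := by
  ext g
  simp [ball, eq_comm]

theorem ball_succ (n : ℕ) : ball S (n + 1) = ball S 1 * ball S n := by
  refine subset_antisymm ?_ ?_
  · rintro g ⟨l, hl, hlS, rfl⟩
    cases l with
    | nil => exact ⟨1, one_mem_ball S 1, 1, one_mem_ball S n, by simp⟩
    | cons x l =>
      refine ⟨x, ⟨[x], by simp, by simpa using hlS x (by simp), by simp⟩, l.prod,
        ⟨l, by simpa using hl, fun y hy => hlS y (by simp [hy]), rfl⟩, rfl⟩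
  · rintro _ ⟨a, ha, b, hb, rfl⟩
    rw [add_comm]
    exact mul_mem_ball S ha hb

theorem ball_eq_pow (n : ℕ) : ball S n = ball S 1 ^ n := by
  induction n with
  | zero => rw [ball_zero, pow_zero]
  | succ n ih => rw [ball_succ, ih, pow_succ']

theorem inv_ball_eq (n : ℕ) : (ball S n)⁻¹ = ball S n := by
  have h1 : (ball S 1)⁻¹ = ball S 1 := by
    ext g
    simp only [Set.mem_inv, mem_ball_one, inv_eq_one, inv_inv]
    tauto
  rw [ball_eq_pow, ← inv_pow, h1]

theorem inv_mem_ball {g : G} {n : ℕ} (hg : g ∈ ball S n) : g⁻¹ ∈ ball S n := by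
  rwa [← inv_ball_eq, Set.inv_mem_inv]

theorem ball_finite (n : ℕ) : (ball S n).Finite := by
  have h1 : (ball S 1).Finite := by
    refine ((S.finite_toSet.union S.finite_toSet.inv).insert 1).subset fun g hg => ?_
    simpa [mem_ball_one] using hg
  induction n with
  | zero => rw [ball_zero]; exact Set.finite_one
  | succ n ih => rw [ball_succ]; exact h1.mul ih

theorem exists_mem_ball (hS : closure (S : Set G) = ⊤) (g : G) : ∃ n, g ∈ ball S n := by
  have hg : g ∈ Submonoid.closure ((S : Set G) ∪ (S : Set G)⁻¹) := by
    rw [← closure_toSubmonoid, hS]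
    exact mem_top g
  obtain ⟨l, hlS, rfl⟩ := Submonoid.exists_list_of_mem_closure hg
  exact ⟨l.length, l, le_rfl, hlS, rfl⟩

theorem card_ball_mul_le (p n : ℕ) : Nat.card (ball S (p * n)) ≤ Nat.card (ball S n) ^ p := by
  induction p with
  | zero => simp [ball_zero]
  | succ p ih =>
    rw [Nat.succ_mul, ball_eq_pow, pow_add, ← ball_eq_pow, ← ball_eq_pow, pow_succ]
    exact Set.natCard_mul_le.trans (Nat.mul_le_mul_right _ ih)

theorem image_ball_subset {H : Type*} [Group H] (f : H →* G) (T : Finset H) {p : ℕ}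
    (hT : ∀ t ∈ T, f t ∈ ball S p) (n : ℕ) : f '' ball T n ⊆ ball S (p * n) := by
  rw [ball_eq_pow T, Set.image_pow, ball_eq_pow S, pow_mul, ← ball_eq_pow S]
  refine Set.pow_subset_pow_left ?_
  rintro _ ⟨t, ht, rfl⟩
  rcases (mem_ball_one T).1 ht with rfl | ht | ht
  · rw [map_one]
    exact one_mem_ball S p
  · exact hT t ht
  · simpa using inv_mem_ball S (hT _ ht)

theorem card_ball_le_card_ball_pow {H : Type*} [Group H] (f : H →* G)
    (hf : Function.Injective f) (T : Finset H) {p : ℕ} (hT : ∀ t ∈ T, f t ∈ ball S p) (n : ℕ) :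
    Nat.card (ball T n) ≤ Nat.card (ball S n) ^ p :=
  calc Nat.card (ball T n) = Nat.card (f '' ball T n) := (Nat.card_image_of_injective hf _).symm
    _ ≤ Nat.card (ball S (p * n)) := Nat.card_mono (ball_finite S _) (image_ball_subset S f T hT n)
    _ ≤ Nat.card (ball S n) ^ p := card_ball_mul_le S p n

end Ball

section GrowthRate

variable {G : Type*} [Group G] (S : Finset G)

theorem growthRate_nonneg : 0 ≤ growthRate S :=
  Real.iInf_nonneg fun _ => by positivity

theorem growthRate_le (n : ℕ) :
    growthRate S ≤ (Nat.card (ball S (n + 1)) : ℝ) ^ ((n : ℝ) + 1)⁻¹ :=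
  ciInf_le ⟨0, by rintro _ ⟨m, rfl⟩; positivity⟩ n

theorem growthRate_rpow_inv_le {H : Type*} [Group H] (T : Finset H) {p : ℕ} (hp : 0 < p)
    (h : ∀ n, Nat.card (ball T n) ≤ Nat.card (ball S n) ^ p) :
    growthRate T ^ (p : ℝ)⁻¹ ≤ growthRate S := by
  refine le_ciInf fun n => ?_
  have hcard : (Nat.card (ball T (n + 1)) : ℝ) ≤ (Nat.card (ball S (n + 1)) : ℝ) ^ p := by
    exact_mod_cast h (n + 1)
  rw [Real.rpow_inv_le_iff_of_pos (growthRate_nonneg T) (by positivity) (by positivity)]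
  calc growthRate T ≤ (Nat.card (ball T (n + 1)) : ℝ) ^ ((n : ℝ) + 1)⁻¹ := growthRate_le T n
    _ ≤ ((Nat.card (ball S (n + 1)) : ℝ) ^ p) ^ ((n : ℝ) + 1)⁻¹ := by gcongr
    _ = ((Nat.card (ball S (n + 1)) : ℝ) ^ ((n : ℝ) + 1)⁻¹) ^ (p : ℝ) := by
      rw [Real.rpow_natCast, ← Real.rpow_natCast_mul (by positivity), mul_comm,
        Real.rpow_mul_natCast (by positivity)]

theorem groupGrowthRate_nonneg : 0 ≤ groupGrowthRate G :=
  Real.sInf_nonneg (by rintro _ ⟨S, -, rfl⟩; exact growthRate_nonneg S)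

theorem groupGrowthRate_le (hS : closure (S : Set G) = ⊤) : groupGrowthRate G ≤ growthRate S :=
  csInf_le ⟨0, by rintro _ ⟨S, -, rfl⟩; exact growthRate_nonneg S⟩ ⟨S, hS, rfl⟩

end GrowthRate

section Covering

variable {M X : Type*} [Monoid M] [MulAction M X] [MulAction.IsPretransitive M X] {A : Set M}
  (hA1 : 1 ∈ A) (hA : ∀ g, ∃ n, g ∈ A ^ n)
include hA1 hA

theorem MulAction.pow_smul_singleton_eq_univ_of_succ_subset {x : X} {n : ℕ}
    (hn : A ^ (n + 1) • ({x} : Set X) ⊆ A ^ n • {x}) : A ^ n • ({x} : Set X) = Set.univ := by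
  have hB : ∀ m, A ^ m • ({x} : Set X) ⊆ A ^ n • {x} := by
    intro m
    induction m with
    | zero => simpa using Set.smul_mem_smul (Set.one_mem_pow hA1) (Set.mem_singleton x)
    | succ m ih =>
      rw [pow_succ', mul_smul]
      exact (Set.smul_subset_smul_left ih).trans (by rwa [← mul_smul, ← pow_succ'])
  refine Set.eq_univ_of_forall fun y => ?_
  obtain ⟨g, rfl⟩ := MulAction.exists_smul_eq M x y
  obtain ⟨m, hm⟩ := hA g
  exact hB m (Set.smul_mem_smul hm rfl)

theorem MulAction.pow_smul_singleton_eq_univ [Finite X] (x : X) :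
    A ^ (Nat.card X - 1) • ({x} : Set X) = Set.univ := by
  set B : ℕ → Set X := fun n => A ^ n • {x}
  change B (Nat.card X - 1) = Set.univ
  have hmono : Monotone B := fun m n h =>
    Set.smul_subset_smul_right (Set.pow_subset_pow_right hA1 h)
  have hgrow : ∀ n, B n = Set.univ ∨ n + 1 ≤ (B n).ncard := by
    intro n
    induction n with
    | zero => simp [B]
    | succ n ih =>
      by_cases hn : B (n + 1) ⊆ B n
      · have := MulAction.pow_smul_singleton_eq_univ_of_succ_subset hA1 hA hn
        exact Or.inl (Set.eq_univ_of_univ_subset (this ▸ hmono n.le_succ))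
      · rcases ih with h | h
        · exact absurd (h ▸ Set.subset_univ _) hn
        · have : (B n).ncard < (B (n + 1)).ncard :=
            Set.ncard_lt_ncard ⟨hmono n.le_succ, hn⟩ (Set.toFinite _)
          exact Or.inr (by omega)
  have : 0 < Nat.card X := Nat.card_pos_iff.2 ⟨⟨x⟩, inferInstance⟩
  rcases hgrow (Nat.card X - 1) with h | h
  · exact h
  · exact (Set.eq_univ_iff_ncard _).2 (le_antisymm (Set.ncard_le_card (B _)) (by omega))

end Covering

theorem Subgroup.exists_isComplement_right_subset {G : Type*} [Group G] {H : Subgroup G}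
    {B : Set G} (h1 : 1 ∈ B) (hB : ∀ g, ∃ b ∈ B, g * b⁻¹ ∈ H) :
    ∃ R ⊆ B, IsComplement (H : Set G) R ∧ 1 ∈ R := by
  classical
  choose f hfB hf using fun q : Quotient (QuotientGroup.rightRel H) => hB q.out
  set f' := Function.update f (Quotient.mk'' 1) 1
  refine ⟨Set.range f', ?_, isComplement_range_right fun q => ?_,
    ⟨Quotient.mk'' 1, Function.update_self _ _ _⟩⟩
  · rintro _ ⟨q, rfl⟩
    by_cases hq : q = Quotient.mk'' 1
    · simpa [f', hq] using h1
    · simpa [f', hq] using hfB q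
  · by_cases hq : q = Quotient.mk'' 1
    · simp [f', hq]
    · rw [show f' q = f q from Function.update_of_ne hq _ _]
      exact (Quotient.sound' (QuotientGroup.rightRel_apply.2 (hf q))).trans q.out_eq'

section FiniteIndex

variable {G : Type*} [Group G] (S : Finset G) (hS : closure (S : Set G) = ⊤) (K : Subgroup G)
  [K.FiniteIndex]
include hS

-- Reach the left coset of `g⁻¹` and invert: Schreier's lemma wants right cosets.
theorem exists_mem_ball_mul_inv_mem (g : G) : ∃ r ∈ ball S (K.index - 1), g * r⁻¹ ∈ K := by
  have := K.finite_quotient_of_finiteIndex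
  have hcover := MulAction.pow_smul_singleton_eq_univ (one_mem_ball S 1)
    (fun g => by simpa only [← ball_eq_pow] using exists_mem_ball S hS g)
    (QuotientGroup.mk 1 : G ⧸ K)
  rw [← index_eq_card, ← ball_eq_pow, Set.smul_singleton] at hcover
  obtain ⟨r, hr, hrg⟩ : (QuotientGroup.mk g⁻¹ : G ⧸ K) ∈ _ := hcover ▸ Set.mem_univ _
  refine ⟨r⁻¹, inv_mem_ball S hr, ?_⟩
  rw [inv_inv, ← K.inv_mem_iff, mul_inv_rev]
  simpa [QuotientGroup.eq] using hrg

theorem closure_preimage_ball_eq_top :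
    closure (((↑) : K → G) ⁻¹' ball S (2 * K.index - 1)) = ⊤ := by
  obtain ⟨R, hRB, hR, hR1⟩ := exists_isComplement_right_subset (one_mem_ball S (K.index - 1))
    (exists_mem_ball_mul_inv_mem S hS K)
  refine eq_top_mono (closure_mono ?_) (closure_mul_image_eq_top hR hR1 hS)
  -- A Schreier generator is `r s t⁻¹` with `r, t ∈ R ⊆ ball S (d - 1)` and `s ∈ S`.
  rintro _ ⟨_, ⟨r, hr, s, hs, rfl⟩, rfl⟩
  have hs1 : s ∈ ball S 1 := (mem_ball_one S).2 (Or.inr (Or.inl hs))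
  have := mul_mem_ball S (mul_mem_ball S (hRB hr) hs1)
    (inv_mem_ball S (hRB (hR.toRightFun (r * s)).2))
  exact ball_mono S (by have := FiniteIndex.index_ne_zero (H := K); omega) this

theorem exists_closure_eq_top_growthRate_rpow_inv_le :
    ∃ T : Finset K, closure (T : Set K) = ⊤ ∧
      growthRate T ^ ((2 * K.index - 1 : ℕ) : ℝ)⁻¹ ≤ growthRate S := by
  have hfin : (((↑) : K → G) ⁻¹' ball S (2 * K.index - 1)).Finite :=
    (ball_finite S _).preimage Subtype.val_injective.injOn
  refine ⟨hfin.toFinset, by rw [hfin.coe_toFinset]; exact closure_preimage_ball_eq_top S hS K,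
    growthRate_rpow_inv_le S _ (by have := FiniteIndex.index_ne_zero (H := K); omega)
      (card_ball_le_card_ball_pow S K.subtype K.subtype_injective _ fun t ht => ?_)⟩
  simpa using ht

end FiniteIndex

/-- `β(Γ) ≥ β(K)^{1/(2d−1)}` for a subgroup `K` of finite index `d`. -/
theorem growth_of_finite_index_subgroup {G : Type*} [Group G]
    (hfg : Group.FG G) (K : Subgroup G) (d : ℕ) (hd0 : 0 < d) (hd : K.index = d) :
    groupGrowthRate ↥K ^ ((2 * (d : ℝ) - 1)⁻¹) ≤ groupGrowthRate G := by
  have : K.FiniteIndex := ⟨by omega⟩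
  have hexp : ((2 * K.index - 1 : ℕ) : ℝ) = 2 * (d : ℝ) - 1 := by
    rw [Nat.cast_sub (by omega)]
    push_cast [hd]
    ring
  obtain ⟨S₀, hS₀⟩ := hfg.out
  refine le_csInf ⟨_, S₀, hS₀, rfl⟩ ?_
  rintro _ ⟨S, hS, rfl⟩
  obtain ⟨T, hT, hTS⟩ := exists_closure_eq_top_growthRate_rpow_inv_le S hS K
  rw [← hexp]
  calc groupGrowthRate K ^ ((2 * K.index - 1 : ℕ) : ℝ)⁻¹
      ≤ growthRate T ^ ((2 * K.index - 1 : ℕ) : ℝ)⁻¹ :=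
        Real.rpow_le_rpow groupGrowthRate_nonneg (groupGrowthRate_le T hT) (by positivity)
    _ ≤ growthRate S := hTS
end

section
/- Let A ∈ GL(r, ℤ) act on ℤ^r, and let v ∈ ℤ^r. Suppose that the restriction of A, viewed as a linear map on ℂ^r, to the A-invariant subspace span_ℂ{A^i v : i ≥ 0} (the complexified cyclic submodule generated by v) has an eigenvalue λ with |λ| ≥ 2. Then in the split extension ℤ^r ⋊_A ℤ, the elements t and t·v generate a free semigroup, where t denotes the element of the semidirect product mapping to the generator 1 of ℤ (acting on ℤ^r by A) and v is identified with its image in the normal subgroup ℤ^r. -/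
open Subgroup

open Matrix in
/-- The automorphism of `ℤ^r` determined by `A ∈ GL(r,ℤ)`. -/
noncomputable def glAddAut {r : ℕ} (A : GL (Fin r) ℤ) : AddAut (Fin r → ℤ) :=
  (Matrix.GeneralLinearGroup.toLin A).toLinearEquiv.toAddEquiv

open Matrix in
/-- The action of `ℤ` on `ℤ^r` by powers of `A`, as used in the split extension
`ℤ^r ⋊_A ℤ`. -/
noncomputable def glZAction {r : ℕ} (A : GL (Fin r) ℤ) :
    Multiplicative ℤ →* MulAut (Multiplicative (Fin r → ℤ)) :=
  zpowersHom _ (AddEquiv.toMultiplicative (glAddAut A))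

/-!
A positive word `b₀ ⋯ bₙ₋₁` in `t` and `t v` equals `(q(A) v, n)` in `ℤ^r ⋊_A ℤ`, where
`q = ∑ εᵢ X ^ (i + 1)` and `εᵢ ∈ {0, 1}` records whether `bᵢ = t v`. Two words with the same
value therefore have the same length, and the difference `d` of their polynomials, whose
coefficients lie in `{-1, 0, 1}`, satisfies `d(A) v = 0`. Then `d(A)` kills the whole cyclic
span of `v`, in particular the eigenvector `x`, so `d(λ) = 0`. For `|λ| ≥ 2` this forces `d = 0`:
the leading term of `d(λ)` has modulus `|λ|ⁿ`, while the others sum to at most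
`∑_{i<n} |λ|ⁱ ≤ |λ|ⁿ - 1`.
-/

open Polynomial Matrix

theorem FreeSemigroup.lift_injective_of_injective_listProd {α M : Type*} [Monoid M]
    {f : α → M} (h : Function.Injective fun L : List α => (L.map f).prod) :
    Function.Injective (FreeSemigroup.lift f) := by
  have hcomp : (FreeMonoid.lift f).toMulHom.comp toFreeMonoid = FreeSemigroup.lift f :=
    FreeSemigroup.hom_ext (by ext; simp)
  have hlift (w : FreeSemigroup α) :
      FreeSemigroup.lift f w = ((toFreeMonoid w).toList.map f).prod := by
    rw [← FreeMonoid.lift_apply, ← hcomp]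
    rfl
  intro w₁ w₂ hw
  rw [hlift, hlift] at hw
  exact toFreeMonoid_injective (FreeMonoid.toList.injective (h hw))

theorem Polynomial.aeval_ne_zero_of_abs_coeff_le_one {K : Type*} [NormedDivisionRing K]
    {p : ℤ[X]} (hp : p ≠ 0) (hcoeff : ∀ i, |p.coeff i| ≤ 1) {z : K} (hz : 2 ≤ ‖z‖) :
    aeval z p ≠ 0 := by
  have hnorm (i : ℕ) : ‖(p.coeff i : K)‖ = if p.coeff i = 0 then 0 else 1 := by
    rcases Int.abs_le_one_iff.1 (hcoeff i) with h | h | h <;> simp [h]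
  set n := p.natDegree
  have hlead : ‖(p.coeff n : K)‖ = 1 := by
    rw [hnorm, if_neg (show p.coeff n ≠ 0 from leadingCoeff_ne_zero.2 hp)]
  have hlow : ‖∑ i ∈ Finset.range n, p.coeff i • z ^ i‖ ≤ ‖z‖ ^ n - 1 := calc
    _ ≤ ∑ i ∈ Finset.range n, ‖z‖ ^ i := by
      refine norm_sum_le_of_le _ fun i _ => ?_
      rw [zsmul_eq_mul, norm_mul, norm_pow, hnorm]
      split_ifs <;> simp
    _ ≤ (∑ i ∈ Finset.range n, ‖z‖ ^ i) * (‖z‖ - 1) :=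
      le_mul_of_one_le_right (by positivity) (by linarith)
    _ = ‖z‖ ^ n - 1 := geom_sum_mul _ _
  intro h
  rw [aeval_eq_sum_range, Finset.sum_range_succ, add_eq_zero_iff_eq_neg] at h
  have := congrArg norm h
  rw [norm_neg, zsmul_eq_mul, norm_mul, norm_pow, hlead, one_mul] at this
  linarith

theorem Module.End.eval_eq_zero_of_aeval_apply_eq_zero {R V : Type*} [CommRing R] [IsDomain R]
    [AddCommGroup V] [Module R V] [Module.IsTorsionFree R V] {f : Module.End R V} {μ : R}
    {v x : V} {p : R[X]} (hx : x ∈ Submodule.span R (Set.range fun i : ℕ => (f ^ i) v))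
    (hμ : f.HasEigenvector μ x) (hp : aeval f p v = 0) : p.eval μ = 0 := by
  have hker : x ∈ LinearMap.ker (aeval f p) := by
    refine Submodule.span_le.2 ?_ hx
    rintro _ ⟨i, rfl⟩
    have hcomm : Commute (aeval f p) (f ^ i) := by
      simpa using (Commute.all p (X ^ i)).map (aeval f)
    rw [SetLike.mem_coe, LinearMap.mem_ker, ← Module.End.mul_apply, hcomm.eq,
      Module.End.mul_apply, hp, map_zero]
  rw [LinearMap.mem_ker, Module.End.aeval_apply_of_hasEigenvector hμ] at hker
  exact (smul_eq_zero_iff_left hμ.2).1 hker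

theorem Matrix.aeval_eq_zero_of_aeval_mulVec_eq_zero {n K : Type*} [Fintype n] [DecidableEq n]
    [Field K] {M : Matrix n n ℤ} {v : n → ℤ} {p : ℤ[X]} (hp : aeval M p *ᵥ v = 0) {μ : K}
    {x : n → K}
    (hx : x ∈ Submodule.span K {y : n → K |
      ∃ i : ℕ, y = (M.map ((↑·) : ℤ → K) ^ i) *ᵥ fun j => (v j : K)})
    (hx0 : x ≠ 0) (hxμ : M.map ((↑·) : ℤ → K) *ᵥ x = μ • x) : aeval μ p = 0 := by
  set Mc := M.map ((↑·) : ℤ → K)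
  set vc : n → K := fun j => (v j : K)
  have hrel : aeval Mc p *ᵥ vc = 0 := by
    rw [show Mc = (Algebra.ofId ℤ K).mapMatrix M from rfl, aeval_algHom_apply]
    change (aeval M p).map ((↑·) : ℤ → K) *ᵥ vc = 0
    ext j
    simpa [vc, hp, Function.comp_def] using
      (RingHom.map_mulVec (Int.castRingHom K) (aeval M p) v j).symm
  have hrange : {y | ∃ i : ℕ, y = Mc ^ i *ᵥ vc} = Set.range fun i : ℕ => (toLin' Mc ^ i) vc := by
    ext y
    simp [← toLin'_pow, eq_comm]
  rw [hrange] at hx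
  rw [← eval_map_algebraMap]
  refine Module.End.eval_eq_zero_of_aeval_apply_eq_zero hx
    (Module.End.hasEigenvector_iff.2 ⟨Module.End.mem_eigenspace_iff.2 hxμ, hx0⟩) ?_
  rw [show toLin' Mc = toLinAlgEquiv' Mc from rfl, aeval_algHom_apply, aeval_map_algebraMap,
    toLinAlgEquiv'_apply, hrel]

noncomputable def wordPoly : List Bool → ℤ[X]
  | [] => 0
  | b :: L => X * (C (if b then 0 else 1) + wordPoly L)

@[simp]
theorem coeff_wordPoly_zero (L : List Bool) : (wordPoly L).coeff 0 = 0 := by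
  cases L <;> simp [wordPoly]

theorem coeff_wordPoly_mem_Icc (L : List Bool) (i : ℕ) : (wordPoly L).coeff i ∈ Set.Icc 0 1 := by
  induction L generalizing i with
  | nil => simp [wordPoly]
  | cons b L ih =>
    rcases i with _ | _ | i
    · simp
    · cases b <;> simp [wordPoly]
    · simpa only [wordPoly, coeff_X_mul, coeff_add, coeff_C_succ, zero_add] using ih (i + 1)

theorem abs_coeff_wordPoly_sub_wordPoly_le_one (L₁ L₂ : List Bool) (i : ℕ) :
    |(wordPoly L₁ - wordPoly L₂).coeff i| ≤ 1 := by
  obtain ⟨h₁, h₁'⟩ := coeff_wordPoly_mem_Icc L₁ i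
  obtain ⟨h₂, h₂'⟩ := coeff_wordPoly_mem_Icc L₂ i
  rw [coeff_sub, abs_sub_le_iff]
  constructor <;> linarith

theorem wordPoly_injective {L₁ L₂ : List Bool} (hlen : L₁.length = L₂.length)
    (h : wordPoly L₁ = wordPoly L₂) : L₁ = L₂ := by
  induction L₁ generalizing L₂ with
  | nil => simpa [eq_comm] using hlen
  | cons b₁ L₁ ih =>
    obtain _ | ⟨b₂, L₂⟩ := L₂
    · simp at hlen
    have h' := mul_left_cancel₀ X_ne_zero h
    have hb : b₁ = b₂ := by
      have h₀ := congrArg (coeff · 0) h'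
      simp only [coeff_add, coeff_C_zero, coeff_wordPoly_zero, add_zero] at h₀
      cases b₁ <;> cases b₂ <;> simp_all
    subst hb
    rw [ih (Nat.succ_injective hlen) (add_left_cancel h')]

section SplitExtension

variable {r : ℕ} (A : GL (Fin r) ℤ)

local notation "G" => Multiplicative (Fin r → ℤ) ⋊[glZAction A] Multiplicative ℤ
local notation "t" => (SemidirectProduct.inr (Multiplicative.ofAdd (1 : ℤ)) : G)

theorem glZAction_ofAdd_one_apply (w : Fin r → ℤ) :
    glZAction A (.ofAdd 1) (.ofAdd w) = .ofAdd ((A : Matrix (Fin r) (Fin r) ℤ) *ᵥ w) := by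
  simp [glZAction, glAddAut]

theorem inr_ofAdd_one_mul_inl (w : Fin r → ℤ) :
    t * SemidirectProduct.inl (.ofAdd w) =
      SemidirectProduct.inl (.ofAdd ((A : Matrix (Fin r) (Fin r) ℤ) *ᵥ w)) * t := by
  rw [← glZAction_ofAdd_one_apply, SemidirectProduct.inl_aut, map_inv, inv_mul_cancel_right]

theorem list_prod_map_letters (v : Fin r → ℤ) (L : List Bool) :
    (L.map fun b => if b then t else t * SemidirectProduct.inl (.ofAdd v)).prod =
      SemidirectProduct.inl (.ofAdd (aeval (A : Matrix (Fin r) (Fin r) ℤ) (wordPoly L) *ᵥ v)) *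
        SemidirectProduct.inr (.ofAdd (L.length : ℤ)) := by
  induction L with
  | nil => simp [wordPoly]
  | cons b L ih =>
    have hletter : (if b then t else t * SemidirectProduct.inl (.ofAdd v)) =
        t * SemidirectProduct.inl (.ofAdd ((if b then 0 else 1 : ℤ) • v)) := by
      cases b <;> simp
    rw [List.map_cons, List.prod_cons, ih, hletter, ← mul_assoc, mul_assoc t, ← map_mul,
      ← ofAdd_add, inr_ofAdd_one_mul_inl, mul_assoc, ← map_mul, ← ofAdd_add]
    congr 3
    · cases b <;> simp [wordPoly, mulVec_add, add_mulVec, ← mulVec_mulVec]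
    · push_cast [List.length_cons]
      ring

end SplitExtension

open Matrix in
/-- an eigenvalue of modulus at least 2 on the complexified cyclic
submodule generated by `v` yields a free semigroup on `t` and `t·v` in `ℤ^r ⋊_A ℤ`. -/
theorem free_semigroup_in_split_extension {r : ℕ} (A : GL (Fin r) ℤ) (v : Fin r → ℤ)
    (hEig : ∃ lam : ℂ, 2 ≤ ‖lam‖ ∧
      ∃ x : Fin r → ℂ,
        x ∈ Submodule.span ℂ {y : Fin r → ℂ |
          ∃ i : ℕ, y = (((A : Matrix (Fin r) (Fin r) ℤ).map ((↑·) : ℤ → ℂ)) ^ i).mulVec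
            (fun j => (v j : ℂ))} ∧
        x ≠ 0 ∧
        ((A : Matrix (Fin r) (Fin r) ℤ).map ((↑·) : ℤ → ℂ)).mulVec x = lam • x) :
    GeneratesFreeSemigroup
      (SemidirectProduct.inr (Multiplicative.ofAdd (1 : ℤ)) :
        Multiplicative (Fin r → ℤ) ⋊[glZAction A] Multiplicative ℤ)
      (SemidirectProduct.inr (Multiplicative.ofAdd (1 : ℤ)) *
        SemidirectProduct.inl (Multiplicative.ofAdd v)) := by
  obtain ⟨μ, hμ, x, hx, hx0, hxμ⟩ := hEig
  refine FreeSemigroup.lift_injective_of_injective_listProd fun L₁ L₂ h => ?_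
  obtain ⟨hv, hlen⟩ : aeval (A : Matrix (Fin r) (Fin r) ℤ) (wordPoly L₁) *ᵥ v =
      aeval (A : Matrix (Fin r) (Fin r) ℤ) (wordPoly L₂) *ᵥ v ∧ L₁.length = L₂.length := by
    simpa [list_prod_map_letters, SemidirectProduct.ext_iff] using h
  refine wordPoly_injective hlen (sub_eq_zero.1 ?_)
  by_contra hne
  have hrel : aeval (A : Matrix (Fin r) (Fin r) ℤ) (wordPoly L₁ - wordPoly L₂) *ᵥ v = 0 := by
    rw [map_sub, sub_mulVec, hv, sub_self]
  exact aeval_ne_zero_of_abs_coeff_le_one hne (abs_coeff_wordPoly_sub_wordPoly_le_one L₁ L₂) hμ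
    (Matrix.aeval_eq_zero_of_aeval_mulVec_eq_zero hrel hx hx0 hxμ)
end

section
/- Let p be a monic polynomial with integer coefficients such that p(0) ≠ 0. Then all roots of p in ℂ have absolute value at most 1 if and only if all roots of p in ℂ are roots of unity. -/
/-!
If every root lies in the closed unit disk, the Mahler measure `|lc p| · ∏ max 1 |zᵢ|` of the monic
polynomial `p` equals `1`. Kronecker's theorem in the form of Mathlib's
`Polynomial.pow_eq_one_of_mahlerMeasure_eq_one` then makes every nonzero root a root of unity, and
`p(0) ≠ 0` rules out the root `0`. Conversely, roots of unity have absolute value `1`.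
-/

open Polynomial

theorem Polynomial.Monic.mahlerMeasure_eq_one_of_norm_roots_le_one {p : ℂ[X]} (hp : p.Monic)
    (h : ∀ z ∈ p.roots, ‖z‖ ≤ 1) : p.mahlerMeasure = 1 := by
  rw [mahlerMeasure_eq_leadingCoeff_mul_prod_roots, hp.leadingCoeff, norm_one, one_mul]
  refine Multiset.prod_eq_one fun x hx => ?_
  obtain ⟨z, hz, rfl⟩ := Multiset.mem_map.mp hx
  exact max_eq_left (h z hz)

/-- Kronecker: a monic integer polynomial not vanishing at 0 has all
complex roots of absolute value at most 1 iff all its complex roots are roots of unity. -/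
theorem kronecker_roots_of_unity (p : Polynomial ℤ) (hmonic : p.Monic)
    (h0 : p.eval 0 ≠ 0) :
    (∀ z : ℂ, Polynomial.aeval z p = 0 → ‖z‖ ≤ 1) ↔
    (∀ z : ℂ, Polynomial.aeval z p = 0 → ∃ n : ℕ, 1 ≤ n ∧ z ^ n = 1) := by
  constructor
  · intro h z hz
    have hz₀ : z ≠ 0 := by
      rintro rfl
      rw [← coeff_zero_eq_aeval_zero', algebraMap_int_eq, eq_intCast, Int.cast_eq_zero,
        coeff_zero_eq_eval_zero] at hz
      exact h0 hz
    have hmahler : (p.map (Int.castRingHom ℂ)).mahlerMeasure = 1 :=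
      (hmonic.map _).mahlerMeasure_eq_one_of_norm_roots_le_one fun w hw =>
        h w (mem_aroots.mp hw).2
    exact pow_eq_one_of_mahlerMeasure_eq_one hmahler hz₀ (mem_aroots.mpr ⟨hmonic.ne_zero, hz⟩)
  · intro h z hz
    obtain ⟨n, hn, hzn⟩ := h z hz
    exact (Complex.norm_eq_one_of_pow_eq_one hzn (by omega)).le
end
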